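/- For each M ≥ 1 let ĥ_A^(M) and ĥ_B^(M) be independent complex Gaussian random vectors in ℂ^M such that ĥ_X^(M) has mean m_X^(M) with ‖m_X^(M)‖² = M·β_X·K_X/(K_X+1) and i.i.d. entries of variance v_X = β_X·η_X/(K_X+1) (not depending on M). If |⟨m_B^(M), m_A^(M)⟩|/M → 0 as M → ∞, then for any p_A ≥ 0, (1/M²)·E{ p_A( |ĥ_A^(M)H ĥ_A^(M)|² + |ĥ_B^(M)H ĥ_A^(M)|² ) } → p_A·ω_A² as M → ∞, where ω_A = β_A(K_A+η_A)/(K_A+1). This is the asymptotically exact form of the approximation (40) for the desired-signal term E{A_i} ≈ M²·p_{A,i}·ω_{AR,i}². -/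

import Mathlib

open MeasureTheory ProbabilityTheory

/-- `u^H w = ∑ₖ conj(uₖ) wₖ`. -/
noncomputable def dotH {M : ℕ} (u w : Fin M → ℂ) : ℂ :=
  ∑ k, (starRingEnd ℂ) (u k) * w k

/-- `‖u‖² = u^H u = ∑ₖ |uₖ|²`. -/
noncomputable def norm2 {M : ℕ} (u : Fin M → ℂ) : ℝ :=
  ∑ k, Complex.normSq (u k)

/-- A complex Gaussian random vector in `ℂ^M` with mean `m` and i.i.d. circularly
symmetric entries of variance `v`: `x = m + z` where the `2M` real random variables
`Re z₁, …, Re z_M, Im z₁, …, Im z_M` are mutually independent real Gaussian random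
variables each with mean `0` and variance `v/2`. -/
def IsComplexGaussianVec {Ω : Type*} [MeasurableSpace Ω] (μ : Measure Ω) (M : ℕ)
    (x : Ω → Fin M → ℂ) (m : Fin M → ℂ) (v : ℝ) : Prop :=
  (∀ k, Measurable fun ω => x ω k) ∧
  iIndepFun (m := fun _ : Fin M ⊕ Fin M => inferInstance)
    (Sum.elim (fun k ω => (x ω k - m k).re) (fun k ω => (x ω k - m k).im)) μ ∧
  (∀ k : Fin M, μ.map (fun ω => (x ω k - m k).re) = gaussianReal 0 (Real.toNNReal (v / 2))) ∧
  (∀ k : Fin M, μ.map (fun ω => (x ω k - m k).im) = gaussianReal 0 (Real.toNNReal (v / 2)))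

/-!
The real and imaginary parts of each entry `x_k` of `ĥ_A` are independent real Gaussians of
variance `v/2`; their moments (`E X⁴ = 3σ⁴` comes from integrating by parts against the Gaussian
density) give `E[x_k x̄_l] = m_k m̄_l + v δ_kl` and `E|x_k|⁴ = |m_k|⁴ + 4v|m_k|² + 2v²`.
Expanding `‖ĥ_A‖⁴ = ∑_{k,l} |x_k|² |x_l|²` and `|ĥ_B^H ĥ_A|² = ∑_{k,l} x_k x̄_l · y_l ȳ_k` and using
the independence of distinct entries and of `ĥ_A`, `ĥ_B` yields the exact expectations
`E‖ĥ_A‖⁴ = (‖m_A‖² + M v_A)² + 2 v_A ‖m_A‖² + M v_A²` and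
`E|ĥ_B^H ĥ_A|² = |m_B^H m_A|² + v_B ‖m_A‖² + v_A ‖m_B‖² + M v_A v_B`.
After division by `M²` everything except `(‖m_A‖²/M + v_A)² = ω_A²` is `O(1/M)` or `(|m_B^H m_A|/M)²`.
-/

open scoped NNReal ComplexConjugate
open Real

lemma integrable_pow_mul_exp_neg_mul_sq {b : ℝ} (hb : 0 < b) (n : ℕ) :
    Integrable fun x : ℝ => x ^ n * exp (-b * x ^ 2) := by
  simpa [Real.rpow_natCast] using
    integrable_rpow_mul_exp_neg_mul_sq hb (s := n) (by linarith [n.cast_nonneg (α := ℝ)])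

lemma integral_pow_add_two_mul_exp_neg_mul_sq {b : ℝ} (hb : 0 < b) (n : ℕ) :
    ∫ x : ℝ, x ^ (n + 2) * exp (-b * x ^ 2)
      = (n + 1) / (2 * b) * ∫ x : ℝ, x ^ n * exp (-b * x ^ 2) := by
  have hderiv (x : ℝ) : HasDerivAt (fun x => x ^ (n + 1) * exp (-b * x ^ 2))
      ((n + 1) * (x ^ n * exp (-b * x ^ 2)) - 2 * b * (x ^ (n + 2) * exp (-b * x ^ 2))) x := by
    refine ((hasDerivAt_pow (n + 1) x).mul
      ((hasDerivAt_pow 2 x).const_mul (-b)).exp).congr_deriv ?_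
    simp only [Nat.add_sub_cancel, Nat.cast_add, Nat.cast_one, Nat.cast_ofNat]
    ring
  have hint := integrable_pow_mul_exp_neg_mul_sq hb
  have h0 := integral_eq_zero_of_hasDerivAt_of_integrable hderiv
    (((hint n).const_mul _).sub ((hint (n + 2)).const_mul _)) (hint (n + 1))
  rw [integral_sub ((hint n).const_mul _) ((hint (n + 2)).const_mul _), integral_const_mul,
    integral_const_mul, sub_eq_zero] at h0
  rw [div_mul_eq_mul_div, eq_div_iff (by positivity)]
  linarith

namespace ProbabilityTheory

lemma integral_pow_add_two_gaussianReal (v : ℝ≥0) (n : ℕ) :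
    ∫ x, x ^ (n + 2) ∂gaussianReal 0 v = (n + 1) * v * ∫ x, x ^ n ∂gaussianReal 0 v := by
  rcases eq_or_ne v 0 with rfl | hv
  · simp
  have hdens (k : ℕ) : ∫ x, x ^ k ∂gaussianReal 0 v
      = (√(2 * π * v))⁻¹ * ∫ x : ℝ, x ^ k * exp (-(2 * v : ℝ)⁻¹ * x ^ 2) := by
    rw [integral_gaussianReal_eq_integral_smul hv, ← integral_const_mul]
    congr 1 with x
    simp only [gaussianPDFReal, smul_eq_mul, sub_zero]
    ring_nf
  rw [hdens, hdens, integral_pow_add_two_mul_exp_neg_mul_sq (by positivity)]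
  field_simp

lemma integrable_pow_gaussianReal (μ : ℝ) (v : ℝ≥0) (n : ℕ) :
    Integrable (fun x => x ^ n) (gaussianReal μ v) := by
  refine (memLp_id_gaussianReal (μ := μ) (v := v) n).integrable_norm_pow'.mono' (by fun_prop)
    (ae_of_all _ fun x => ?_)
  simp [norm_pow]

lemma integral_pow_gaussianReal_eq_sum (μ : ℝ) (v : ℝ≥0) (n : ℕ) :
    ∫ x, x ^ n ∂gaussianReal μ v
      = ∑ k ∈ Finset.range (n + 1), (∫ x, x ^ k ∂gaussianReal 0 v) * μ ^ (n - k) * n.choose k := by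
  have hmap : (gaussianReal 0 v).map (· + μ) = gaussianReal μ v := by
    simp [gaussianReal_map_add_const]
  rw [← hmap, integral_map (by fun_prop) (by fun_prop)]
  simp_rw [add_pow]
  rw [integral_finsetSum _ fun k _ => ((integrable_pow_gaussianReal 0 v k).mul_const _).mul_const _]
  simp_rw [integral_mul_const]

lemma integral_sq_gaussianReal (μ : ℝ) (v : ℝ≥0) :
    ∫ x, x ^ 2 ∂gaussianReal μ v = μ ^ 2 + v := by
  have h2 := integral_pow_add_two_gaussianReal v 0
  rw [integral_pow_gaussianReal_eq_sum]
  simp [Finset.sum_range_succ, h2]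

lemma integral_pow_four_gaussianReal (μ : ℝ) (v : ℝ≥0) :
    ∫ x, x ^ 4 ∂gaussianReal μ v = μ ^ 4 + 6 * μ ^ 2 * v + 3 * v ^ 2 := by
  have h2 := integral_pow_add_two_gaussianReal v 0
  have h3 := integral_pow_add_two_gaussianReal v 1
  have h4 := integral_pow_add_two_gaussianReal v 2
  rw [integral_pow_gaussianReal_eq_sum]
  simp [Finset.sum_range_succ, h2, h3, h4, Nat.choose]
  ring

namespace HasLaw

variable {Ω : Type*} [MeasurableSpace Ω] {μ : Measure Ω} {X : Ω → ℝ} {a : ℝ} {s : ℝ≥0}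

lemma const_add_gaussianReal (hX : HasLaw X (gaussianReal 0 s) μ) (c : ℝ) :
    HasLaw (fun ω => c + X ω) (gaussianReal c s) μ :=
  HasLaw.comp (Y := (c + ·)) ⟨by fun_prop, by simp [gaussianReal_map_const_add]⟩ hX

lemma memLp_of_gaussianReal (hX : HasLaw X (gaussianReal a s) μ) (p : ℝ≥0) : MemLp X p μ :=
  (memLp_map_measure_iff aestronglyMeasurable_id hX.aemeasurable).1
    (hX.map_eq ▸ memLp_id_gaussianReal p)

lemma integrable_pow_of_gaussianReal (hX : HasLaw X (gaussianReal a s) μ) (n : ℕ) :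
    Integrable (fun ω => X ω ^ n) μ :=
  (integrable_map_measure (g := (· ^ n)) (by fun_prop) hX.aemeasurable).1
    (hX.map_eq ▸ integrable_pow_gaussianReal a s n)

lemma integral_pow_of_gaussianReal (hX : HasLaw X (gaussianReal a s) μ) (n : ℕ) :
    ∫ ω, X ω ^ n ∂μ = ∫ x, x ^ n ∂gaussianReal a s :=
  hX.integral_comp (f := (· ^ n)) (by fun_prop)

end HasLaw

end ProbabilityTheory

section Sums

variable {M : ℕ}

lemma dotH_self (u : Fin M → ℂ) : dotH u u = norm2 u := by
  simp only [dotH, norm2, Complex.ofReal_sum, Complex.normSq_eq_conj_mul_self]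

lemma norm2_sq_eq_sum (u : Fin M → ℂ) :
    norm2 u ^ 2 = ∑ k, ∑ l, Complex.normSq (u k) * Complex.normSq (u l) := by
  rw [norm2, sq, Finset.sum_mul_sum]

lemma normSq_dotH_eq_sum (u w : Fin M → ℂ) :
    (Complex.normSq (dotH u w) : ℂ) = ∑ k, ∑ l, w k * conj (w l) * (u l * conj (u k)) := by
  rw [← Complex.mul_conj, dotH, map_sum, Finset.sum_mul_sum]
  refine Finset.sum_congr rfl fun k _ => Finset.sum_congr rfl fun l _ => ?_
  simp only [map_mul, Complex.conj_conj]
  ring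

lemma sum_sum_mul_add_ite {R : Type*} [CommRing R] (a c : Fin M → R) (v : R) :
    ∑ k, ∑ l, ((a k + v) * (a l + v) + if k = l then c k else 0)
      = (∑ k, a k + M * v) ^ 2 + ∑ k, c k := by
  simp [Finset.sum_add_distrib, ← Finset.sum_mul_sum, Finset.sum_ite_eq]
  ring

lemma sum_sum_second_moments_mul {v w : ℂ} (m n : Fin M → ℂ) :
    ∑ k, ∑ l, (m k * conj (m l) + if k = l then v else 0)
        * (n l * conj (n k) + if l = k then w else 0)
      = Complex.normSq (dotH n m) + w * norm2 m + v * norm2 n + M * (v * w) := by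
  have hterm (k l : Fin M) :
      (m k * conj (m l) + if k = l then v else 0) * (n l * conj (n k) + if l = k then w else 0)
        = m k * conj (m l) * (n l * conj (n k))
          + if k = l then w * Complex.normSq (m k) + v * Complex.normSq (n k) + v * w else 0 := by
    rcases eq_or_ne k l with rfl | hkl
    · simp only [if_true, Complex.mul_conj]
      ring
    · simp [hkl, hkl.symm]
  simp only [hterm, Finset.sum_add_distrib, Finset.sum_ite_eq, Finset.mem_univ, if_true,
    normSq_dotH_eq_sum, norm2, ← Finset.mul_sum]
  simp
  ring

end Sums

section

variable {Ω : Type*} [MeasurableSpace Ω] {μ : Measure Ω} {M : ℕ} {x y : Ω → Fin M → ℂ}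

lemma indepFun_cross_term (hxy : IndepFun x y μ) (k l : Fin M) :
    IndepFun (fun ω => x ω k * conj (x ω l)) (fun ω => y ω l * conj (y ω k)) μ :=
  hxy.comp (φ := fun u : Fin M → ℂ => u k * conj (u l))
    (ψ := fun u : Fin M → ℂ => u l * conj (u k)) (by fun_prop) (by fun_prop)

end

namespace IsComplexGaussianVec

variable {Ω : Type*} [MeasurableSpace Ω] {μ : Measure Ω}
  {M : ℕ} {x y : Ω → Fin M → ℂ} {m n : Fin M → ℂ} {v w : ℝ}

lemma hasLaw_re (hx : IsComplexGaussianVec μ M x m v) (k : Fin M) :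
    HasLaw (fun ω => (x ω k).re) (gaussianReal (m k).re (v / 2).toNNReal) μ := by
  have hk := hx.1 k
  simpa using HasLaw.const_add_gaussianReal ⟨by fun_prop, hx.2.2.1 k⟩ (m k).re

lemma hasLaw_im (hx : IsComplexGaussianVec μ M x m v) (k : Fin M) :
    HasLaw (fun ω => (x ω k).im) (gaussianReal (m k).im (v / 2).toNNReal) μ := by
  have hk := hx.1 k
  simpa using HasLaw.const_add_gaussianReal ⟨by fun_prop, hx.2.2.2 k⟩ (m k).im

lemma iIndepFun_re_im (hx : IsComplexGaussianVec μ M x m v) :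
    iIndepFun (Sum.elim (fun k ω => (x ω k).re) (fun k ω => (x ω k).im)) μ := by
  convert hx.2.1.comp (Sum.elim (fun k => ((m k).re + ·)) (fun k => ((m k).im + ·)))
    (by rintro (k | k) <;> exact measurable_const_add _) using 1
  ext (k | k) ω <;> simp

lemma indepFun_re_im (hx : IsComplexGaussianVec μ M x m v) (k : Fin M) :
    IndepFun (fun ω => (x ω k).re) (fun ω => (x ω k).im) μ :=
  hx.iIndepFun_re_im.indepFun (i := .inl k) (j := .inr k) (by simp)

lemma indepFun_coord (hx : IsComplexGaussianVec μ M x m v) {k l : Fin M} (hkl : k ≠ l) :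
    IndepFun (fun ω => x ω k) (fun ω => x ω l) μ := by
  have hmeas (i : Fin M ⊕ Fin M) :
      Measurable (Sum.elim (fun k ω => (x ω k).re) (fun k ω => (x ω k).im) i) := by
    rcases i with j | j <;> have := hx.1 j <;> simp only [Sum.elim_inl, Sum.elim_inr] <;> fun_prop
  have h := hx.iIndepFun_re_im.indepFun_prodMk_prodMk hmeas (.inl k) (.inr k) (.inl l) (.inr l)
    (by simp [hkl]) (by simp) (by simp) (by simp [hkl])
  convert h.comp Complex.measurableEquivRealProd.symm.measurable
    Complex.measurableEquivRealProd.symm.measurable using 1 <;>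
  ext ω <;> apply Complex.ext <;> simp [Complex.measurableEquivRealProd]

lemma memLp_coord (hx : IsComplexGaussianVec μ M x m v) (k : Fin M) (p : ℝ≥0) :
    MemLp (fun ω => x ω k) p μ :=
  memLp_re_im_iff.1
    ⟨(hx.hasLaw_re k).memLp_of_gaussianReal p, (hx.hasLaw_im k).memLp_of_gaussianReal p⟩

lemma integrable_coord_mul_conj (hx : IsComplexGaussianVec μ M x m v) (k l : Fin M) :
    Integrable (fun ω => x ω k * conj (x ω l)) μ :=
  (hx.memLp_coord k 2).integrable_mul (p := 2) (q := 2) (hx.memLp_coord l 2).star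

lemma integrable_cross_term (hx : IsComplexGaussianVec μ M x m v)
    (hy : IsComplexGaussianVec μ M y n w) (hxy : IndepFun x y μ) (k l : Fin M) :
    Integrable (fun ω => x ω k * conj (x ω l) * (y ω l * conj (y ω k))) μ :=
  (indepFun_cross_term hxy k l).integrable_mul (hx.integrable_coord_mul_conj k l)
    (hy.integrable_coord_mul_conj l k)

lemma integrable_normSq_dotH (hx : IsComplexGaussianVec μ M x m v)
    (hy : IsComplexGaussianVec μ M y n w) (hxy : IndepFun x y μ) :
    Integrable (fun ω => Complex.normSq (dotH (y ω) (x ω))) μ := by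
  refine (integrable_finsetSum Finset.univ fun k _ => integrable_finsetSum Finset.univ fun l _ =>
    integrable_cross_term hx hy hxy k l).re.congr (ae_of_all _ fun ω => ?_)
  simp [← normSq_dotH_eq_sum]

lemma integral_normSq_coord (hx : IsComplexGaussianVec μ M x m v) (hv : 0 ≤ v) (k : Fin M) :
    ∫ ω, Complex.normSq (x ω k) ∂μ = Complex.normSq (m k) + v := by
  have hre := hx.hasLaw_re k
  have him := hx.hasLaw_im k
  simp only [Complex.normSq_apply, ← sq]
  rw [integral_add (hre.integrable_pow_of_gaussianReal 2) (him.integrable_pow_of_gaussianReal 2),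
    hre.integral_pow_of_gaussianReal, him.integral_pow_of_gaussianReal,
    integral_sq_gaussianReal, integral_sq_gaussianReal, Real.coe_toNNReal _ (by linarith)]
  ring

lemma integral_normSq_coord_sq (hx : IsComplexGaussianVec μ M x m v) (hv : 0 ≤ v) (k : Fin M) :
    ∫ ω, Complex.normSq (x ω k) ^ 2 ∂μ
      = Complex.normSq (m k) ^ 2 + 4 * v * Complex.normSq (m k) + 2 * v ^ 2 := by
  have hre := hx.hasLaw_re k
  have him := hx.hasLaw_im k
  have hind : IndepFun (fun ω => (x ω k).re ^ 2) (fun ω => (x ω k).im ^ 2) μ :=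
    (hx.indepFun_re_im k).comp (measurable_id.pow_const 2) (measurable_id.pow_const 2)
  have hre2 := hre.integrable_pow_of_gaussianReal 2
  have him2 := him.integrable_pow_of_gaussianReal 2
  have hmix : Integrable (fun ω => 2 * ((x ω k).re ^ 2 * (x ω k).im ^ 2)) μ :=
    (hind.integrable_mul hre2 him2).const_mul 2
  have hexpand (ω : Ω) : Complex.normSq (x ω k) ^ 2
      = (x ω k).re ^ 4 + 2 * ((x ω k).re ^ 2 * (x ω k).im ^ 2) + (x ω k).im ^ 4 := by
    rw [Complex.normSq_apply]
    ring
  simp only [hexpand]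
  rw [integral_add ((hre.integrable_pow_of_gaussianReal 4).fun_add hmix)
      (him.integrable_pow_of_gaussianReal 4),
    integral_add (hre.integrable_pow_of_gaussianReal 4) hmix, integral_const_mul,
    hind.integral_fun_mul_eq_mul_integral hre2.aestronglyMeasurable him2.aestronglyMeasurable]
  simp only [hre.integral_pow_of_gaussianReal, him.integral_pow_of_gaussianReal,
    integral_sq_gaussianReal, integral_pow_four_gaussianReal,
    Real.coe_toNNReal _ (by linarith : 0 ≤ v / 2), Complex.normSq_apply]
  ring

variable [IsProbabilityMeasure μ]

lemma integral_coord (hx : IsComplexGaussianVec μ M x m v) (k : Fin M) :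
    ∫ ω, x ω k ∂μ = m k := by
  have hint := (hx.memLp_coord k 1).integrable le_rfl
  apply Complex.ext
  · rw [← RCLike.re_to_complex, ← integral_re hint]
    simp [(hx.hasLaw_re k).integral_eq]
  · rw [← RCLike.im_to_complex, ← integral_im hint]
    simp [(hx.hasLaw_im k).integral_eq]

lemma integrable_normSq_coord (hx : IsComplexGaussianVec μ M x m v) (k : Fin M) :
    Integrable (fun ω => Complex.normSq (x ω k)) μ := by
  simpa [Complex.normSq_eq_norm_sq] using (hx.memLp_coord k 2).integrable_norm_pow'

lemma memLp_two_normSq_coord (hx : IsComplexGaussianVec μ M x m v) (k : Fin M) :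
    MemLp (fun ω => Complex.normSq (x ω k)) 2 μ := by
  have hk := hx.1 k
  rw [memLp_two_iff_integrable_sq (by fun_prop)]
  simpa [Complex.normSq_eq_norm_sq, ← pow_mul] using (hx.memLp_coord k 4).integrable_norm_pow'

lemma integral_coord_mul_conj (hx : IsComplexGaussianVec μ M x m v) (hv : 0 ≤ v) (k l : Fin M) :
    ∫ ω, x ω k * conj (x ω l) ∂μ = m k * conj (m l) + if k = l then (v : ℂ) else 0 := by
  rcases eq_or_ne k l with rfl | hkl
  · simp only [Complex.mul_conj, if_true]
    rw [integral_complex_ofReal, hx.integral_normSq_coord hv]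
    push_cast
    ring
  · have hind : IndepFun (fun ω => x ω k) (fun ω => conj (x ω l)) μ :=
      (hx.indepFun_coord hkl).comp measurable_id Complex.continuous_conj.measurable
    have hk := hx.1 k
    have hl := hx.1 l
    rw [hind.integral_fun_mul_eq_mul_integral (by fun_prop) (by fun_prop), integral_conj,
      hx.integral_coord, hx.integral_coord, if_neg hkl, add_zero]

lemma integrable_normSq_mul_normSq (hx : IsComplexGaussianVec μ M x m v) (k l : Fin M) :
    Integrable (fun ω => Complex.normSq (x ω k) * Complex.normSq (x ω l)) μ :=
  (hx.memLp_two_normSq_coord k).integrable_mul (p := 2) (q := 2) (hx.memLp_two_normSq_coord l)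

lemma integral_normSq_mul_normSq (hx : IsComplexGaussianVec μ M x m v) (hv : 0 ≤ v)
    (k l : Fin M) :
    ∫ ω, Complex.normSq (x ω k) * Complex.normSq (x ω l) ∂μ
      = (Complex.normSq (m k) + v) * (Complex.normSq (m l) + v)
        + if k = l then 2 * v * Complex.normSq (m k) + v ^ 2 else 0 := by
  rcases eq_or_ne k l with rfl | hkl
  · simp only [← sq, hx.integral_normSq_coord_sq hv, if_true]
    ring
  · have hind : IndepFun (fun ω => Complex.normSq (x ω k)) (fun ω => Complex.normSq (x ω l)) μ :=
      (hx.indepFun_coord hkl).comp Complex.continuous_normSq.measurable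
        Complex.continuous_normSq.measurable
    rw [hind.integral_fun_mul_eq_mul_integral (hx.integrable_normSq_coord k).1
      (hx.integrable_normSq_coord l).1, hx.integral_normSq_coord hv, hx.integral_normSq_coord hv,
      if_neg hkl, add_zero]

lemma integrable_norm2_sq (hx : IsComplexGaussianVec μ M x m v) :
    Integrable (fun ω => norm2 (x ω) ^ 2) μ := by
  simp_rw [norm2_sq_eq_sum]
  exact integrable_finsetSum _ fun k _ => integrable_finsetSum _ fun l _ =>
    hx.integrable_normSq_mul_normSq k l

lemma integral_norm2_sq (hx : IsComplexGaussianVec μ M x m v) (hv : 0 ≤ v) :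
    ∫ ω, norm2 (x ω) ^ 2 ∂μ = (norm2 m + M * v) ^ 2 + 2 * v * norm2 m + M * v ^ 2 := by
  simp_rw [norm2_sq_eq_sum]
  rw [integral_finsetSum _ fun k _ => integrable_finsetSum _ fun l _ =>
    hx.integrable_normSq_mul_normSq k l]
  simp_rw [integral_finsetSum _ fun l _ => hx.integrable_normSq_mul_normSq _ l,
    hx.integral_normSq_mul_normSq hv, sum_sum_mul_add_ite]
  simp [norm2, Finset.sum_add_distrib, Finset.mul_sum]
  ring

lemma integral_cross_term (hx : IsComplexGaussianVec μ M x m v)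
    (hy : IsComplexGaussianVec μ M y n w) (hv : 0 ≤ v) (hw : 0 ≤ w) (hxy : IndepFun x y μ)
    (k l : Fin M) :
    ∫ ω, x ω k * conj (x ω l) * (y ω l * conj (y ω k)) ∂μ
      = (m k * conj (m l) + if k = l then (v : ℂ) else 0)
        * (n l * conj (n k) + if l = k then (w : ℂ) else 0) := by
  rw [(indepFun_cross_term hxy k l).integral_fun_mul_eq_mul_integral
      (hx.integrable_coord_mul_conj k l).1 (hy.integrable_coord_mul_conj l k).1,
    hx.integral_coord_mul_conj hv, hy.integral_coord_mul_conj hw]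

lemma integral_normSq_dotH (hx : IsComplexGaussianVec μ M x m v)
    (hy : IsComplexGaussianVec μ M y n w) (hv : 0 ≤ v) (hw : 0 ≤ w) (hxy : IndepFun x y μ) :
    ∫ ω, Complex.normSq (dotH (y ω) (x ω)) ∂μ
      = Complex.normSq (dotH n m) + w * norm2 m + v * norm2 n + M * (v * w) := by
  apply Complex.ofReal_injective
  rw [← integral_complex_ofReal]
  simp_rw [normSq_dotH_eq_sum]
  rw [integral_finsetSum _ fun k _ => integrable_finsetSum _ fun l _ =>
    integrable_cross_term hx hy hxy k l]
  simp_rw [integral_finsetSum _ fun l _ => integrable_cross_term hx hy hxy _ l,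
    integral_cross_term hx hy hv hw hxy, sum_sum_second_moments_mul]
  push_cast
  ring

lemma integral_desired_signal (hx : IsComplexGaussianVec μ M x m v)
    (hy : IsComplexGaussianVec μ M y n w) (hv : 0 ≤ v) (hw : 0 ≤ w) (hxy : IndepFun x y μ)
    (p : ℝ) :
    ∫ ω, p * (‖dotH (x ω) (x ω)‖ ^ 2 + ‖dotH (y ω) (x ω)‖ ^ 2) ∂μ
      = p * ((norm2 m + M * v) ^ 2 + 2 * v * norm2 m + M * v ^ 2
        + (Complex.normSq (dotH n m) + w * norm2 m + v * norm2 n + M * (v * w))) := by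
  simp_rw [dotH_self, Complex.norm_real, Real.norm_eq_abs, sq_abs, Complex.sq_norm]
  rw [integral_const_mul, integral_add hx.integrable_norm2_sq (integrable_normSq_dotH hx hy hxy),
    hx.integral_norm2_sq hv, integral_normSq_dotH hx hy hv hw hxy]

end IsComplexGaussianVec

open Filter Topology

theorem tendsto_desired_signal_term_general
    {Ω : Type*} [MeasurableSpace Ω] (μ : Measure Ω) [IsProbabilityMeasure μ]
    (βA βB KA KB : ℝ) (hβA : 0 < βA) (hβB : 0 < βB) (hKA : 0 ≤ KA) (hKB : 0 ≤ KB)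
    (ηA ηB : ℝ) (hηA0 : 0 ≤ ηA) (hηB0 : 0 ≤ ηB)
    (vA vB : ℝ) (hvA : vA = βA * ηA / (KA + 1)) (hvB : vB = βB * ηB / (KB + 1))
    (hA hB : (M : ℕ) → Ω → Fin M → ℂ) (mA mB : (M : ℕ) → Fin M → ℂ)
    (hmA : ∀ M : ℕ, 1 ≤ M → norm2 (mA M) = M * βA * KA / (KA + 1))
    (hmB : ∀ M : ℕ, 1 ≤ M → norm2 (mB M) = M * βB * KB / (KB + 1))
    (hgA : ∀ M : ℕ, 1 ≤ M → IsComplexGaussianVec μ M (hA M) (mA M) vA)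
    (hgB : ∀ M : ℕ, 1 ≤ M → IsComplexGaussianVec μ M (hB M) (mB M) vB)
    (hindep : ∀ M : ℕ, 1 ≤ M → IndepFun (hA M) (hB M) μ)
    (hcross : Tendsto (fun M : ℕ => ‖dotH (mB M) (mA M)‖ / M) atTop (𝓝 0))
    (pA : ℝ)
    (omgA : ℝ) (homgA : omgA = βA * (KA + ηA) / (KA + 1)) :
    Tendsto (fun M : ℕ => (1 / (M : ℝ) ^ 2) *
        ∫ ω, pA * (‖dotH (hA M ω) (hA M ω)‖ ^ 2
          + ‖dotH (hB M ω) (hA M ω)‖ ^ 2) ∂μ)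
      atTop (𝓝 (pA * omgA ^ 2)) := by
  have hvA0 : 0 ≤ vA := hvA ▸ by positivity
  have hvB0 : 0 ≤ vB := hvB ▸ by positivity
  set qA := βA * KA / (KA + 1) with hqA
  set qB := βB * KB / (KB + 1) with hqB
  have homg : qA + vA = omgA := by
    rw [homgA, hvA, hqA]
    field_simp
  set C := 2 * vA * qA + vA ^ 2 + vB * qA + vA * qB + vA * vB with hC
  have hlim : Tendsto (fun M : ℕ => pA * ((qA + vA) ^ 2 + C * (1 / (M : ℝ))
      + (‖dotH (mB M) (mA M)‖ / M) ^ 2)) atTop (𝓝 (pA * omgA ^ 2)) := by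
    simpa [homg] using (((tendsto_one_div_atTop_nhds_zero_nat.const_mul C).const_add
      ((qA + vA) ^ 2)).add (hcross.pow 2)).const_mul pA
  refine hlim.congr' ((eventually_ge_atTop 1).mono fun M hM => ?_)
  have hM0 : (M : ℝ) ≠ 0 := by positivity
  dsimp only
  rw [IsComplexGaussianVec.integral_desired_signal (hgA M hM) (hgB M hM) hvA0 hvB0 (hindep M hM),
    hmA M hM, hmB M hM, Complex.normSq_eq_norm_sq, hC, hqA, hqB]
  field_simp
  ring

/-- asymptotically exact form of the approximation (40) for the
desired-signal term: if `|⟨m_B^(M), m_A^(M)⟩|/M → 0` then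
`(1/M²)·E{ p_A(|ĥ_A^H ĥ_A|² + |ĥ_B^H ĥ_A|²) } → p_A·ω_A²` as `M → ∞`. -/
theorem tendsto_desired_signal_term
    {Ω : Type*} [MeasurableSpace Ω] (μ : Measure Ω) [IsProbabilityMeasure μ]
    (βA βB KA KB : ℝ) (hβA : 0 < βA) (hβB : 0 < βB) (hKA : 0 ≤ KA) (hKB : 0 ≤ KB)
    (ηA ηB : ℝ) (hηA0 : 0 ≤ ηA) (hηA1 : ηA < 1) (hηB0 : 0 ≤ ηB) (hηB1 : ηB < 1)
    (vA vB : ℝ) (hvA : vA = βA * ηA / (KA + 1)) (hvB : vB = βB * ηB / (KB + 1))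
    (hA hB : (M : ℕ) → Ω → Fin M → ℂ) (mA mB : (M : ℕ) → Fin M → ℂ)
    (hmA : ∀ M : ℕ, 1 ≤ M → norm2 (mA M) = M * βA * KA / (KA + 1))
    (hmB : ∀ M : ℕ, 1 ≤ M → norm2 (mB M) = M * βB * KB / (KB + 1))
    (hgA : ∀ M : ℕ, 1 ≤ M → IsComplexGaussianVec μ M (hA M) (mA M) vA)
    (hgB : ∀ M : ℕ, 1 ≤ M → IsComplexGaussianVec μ M (hB M) (mB M) vB)
    (hindep : ∀ M : ℕ, 1 ≤ M → IndepFun (hA M) (hB M) μ)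
    (hcross : Tendsto (fun M : ℕ => ‖dotH (mB M) (mA M)‖ / M) atTop (𝓝 0))
    (pA : ℝ) (hpA : 0 ≤ pA)
    (omgA : ℝ) (homgA : omgA = βA * (KA + ηA) / (KA + 1)) :
    Tendsto (fun M : ℕ => (1 / (M : ℝ) ^ 2) *
        ∫ ω, pA * (‖dotH (hA M ω) (hA M ω)‖ ^ 2
          + ‖dotH (hB M ω) (hA M ω)‖ ^ 2) ∂μ)
      atTop (𝓝 (pA * omgA ^ 2)) :=
  tendsto_desired_signal_term_general μ βA βB KA KB hβA hβB hKA hKB ηA ηB hηA0 hηB0 vA vB hvA hvB hA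
    hB mA mB hmA hmB hgA hgB hindep hcross pA omgA homgA
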